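/- Let (X,d,μ) be upper doubling with dominating function λ and constant C_λ, K a Calderón–Zygmund kernel on X with constant C_K and Dini modulus ω, and D a David–Mattila lattice with parameters C_0, A_0. For a cell Q₀ ∈ D define the localized grand maximal truncated operator N_{Q₀}f(x) := 1_{Q₀}(x)·sup over cells P ∈ D with x ∈ P ⊂ Q₀ of sup_{y∈P} |∫_{X∖30B(P)} K(y,z) f(z) dμ(z)|, and T^♯f(x) := sup_{ε>0} |∫_{d(x,y)>ε} K(x,y) f(y) dμ(y)|. Then there is a constant C depending only on C_λ, C_0, A_0, and absolute constants, such that for every Q₀ ∈ D and every integrable f supported on 30B(Q₀), one has the pointwise bound |N_{Q₀}f(x) − T^♯f(x)| ≤ C·(‖ω‖_Dini + C_K)·M_λ f(x) for all x ∈ Q₀, where M_λ f(x) := sup_{R>0} λ(x,R)^{−1} ∫_{B(x,R)} |f| dμ. -/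

import Mathlib

open MeasureTheory Metric Set ENNReal

noncomputable section

variable {X : Type*} [MetricSpace X] [MeasurableSpace X] [BorelSpace X]

/-- The support of a measure on a metric space: points all of whose balls have
positive measure. -/
def msupport (μ : Measure X) : Set X := {x | ∀ r : ℝ, 0 < r → 0 < μ (ball x r)}

/-- `(X, d, μ)` is upper doubling with dominating function `lam` and constant `Cl`. -/
structure IsUpperDoubling (μ : Measure X) (lam : X → ℝ → ℝ) (Cl : ℝ) : Prop where
  one_lt : 1 < Cl
  lam_pos : ∀ x r, 0 < r → 0 < lam x r
  lam_mono : ∀ x r₁ r₂, 0 < r₁ → r₁ ≤ r₂ → lam x r₁ ≤ lam x r₂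
  measure_le : ∀ x r, 0 < r → μ (ball x r) ≤ ENNReal.ofReal (lam x r)
  halving : ∀ x r, 0 < r → lam x r ≤ Cl * lam x (r / 2)
  close : ∀ x y r, 0 < r → dist x y ≤ r → lam x r ≤ Cl * lam y r

/-- `(X, d)` is geometrically doubling with constant `C` and doubling dimension `n`:
every `r`-separated subset of a ball of radius `R ≥ r` has cardinality at most `C (R/r)^n`. -/
def GeometricallyDoubling (X : Type*) [MetricSpace X] (C : ℝ) (n : ℕ) : Prop :=
  ∀ (x : X) (R r : ℝ), 0 < r → r ≤ R →
    ∀ S : Finset X, (↑S : Set X) ⊆ ball x R →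
      (∀ a ∈ S, ∀ b ∈ S, a ≠ b → r ≤ dist a b) → (S.card : ℝ) ≤ C * (R / r) ^ n

/-- `ω` is a Dini modulus of continuity. -/
structure IsDiniModulus (ω : ℝ → ℝ) : Prop where
  nonneg : ∀ t, 0 ≤ t → 0 ≤ ω t
  mono : MonotoneOn ω (Set.Ici 0)
  subadd : ∀ s t, 0 ≤ s → 0 ≤ t → ω (s + t) ≤ ω s + ω t
  zero : ω 0 = 0
  pos : ∀ t, 0 < t → 0 < ω t
  summable : Summable (fun j : ℕ => ω ((2 : ℝ) ^ (-(j : ℤ))))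

/-- The Dini norm `∑_{j ≥ 0} ω(2^{-j})`. -/
def diniNorm (ω : ℝ → ℝ) : ℝ := ∑' j : ℕ, ω ((2 : ℝ) ^ (-(j : ℤ)))

/-- `K` is a Calderón–Zygmund kernel with size constant `CK` and modulus of continuity `ω`,
relative to the dominating function `lam`. -/
structure IsCZKernel (lam : X → ℝ → ℝ) (K : X → X → ℂ) (CK : ℝ) (ω : ℝ → ℝ) : Prop where
  size : ∀ x y, x ≠ y → ‖K x y‖ ≤ CK / lam x (dist x y)
  smooth : ∀ x x' y, x ≠ y → dist x x' < dist x y / 2 →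
    ‖K x y - K x' y‖ + ‖K y x - K y x'‖ ≤ ω (dist x x' / dist x y) / lam x (dist x y)

/-- The maximal truncation `T^♯ f(x) = sup_{ε > 0} |∫_{d(x,y) > ε} K(x,y) f(y) dμ(y)|`,
valued in `ℝ≥0∞`. -/
noncomputable def Tsharp (μ : Measure X) (K : X → X → ℂ) (f : X → ℂ) (x : X) : ℝ≥0∞ :=
  ⨆ (ε : ℝ) (_ : 0 < ε), ENNReal.ofReal ‖∫ y in (closedBall x ε)ᶜ, K x y * f y ∂μ‖

/-- `T` is an `L²(μ)`-bounded Calderón–Zygmund operator with kernel `K` and `L²` norm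
bound `CT`. -/
structure IsCZOperator (μ : Measure X) (K : X → X → ℂ) (T : (X → ℂ) → X → ℂ) (CT : ℝ) :
    Prop where
  map_add : ∀ f g, MemLp f 2 μ → MemLp g 2 μ → T (f + g) = T f + T g
  map_smul : ∀ (c : ℂ) (f), MemLp f 2 μ → T (c • f) = c • T f
  norm_bound : ∀ f, MemLp f 2 μ → eLpNorm (T f) 2 μ ≤ ENNReal.ofReal CT * eLpNorm f 2 μ
  rep : ∀ f : X → ℂ, (∃ M, ∀ x, ‖f x‖ ≤ M) → Bornology.IsBounded (Function.support f) →
    ∀ x, x ∉ tsupport f → T f x = ∫ y, K x y * f y ∂μ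

/-- A David–Mattila lattice with parameters `C0, A0` associated to `μ`:
for each generation `k` a Borel partition `cells k` of `supp μ`, each cell `Q` carrying a
ball `B(Q) = B(center k Q, radius k Q)`. -/
structure DavidMattila (μ : Measure X) (C0 A0 : ℝ) where
  cells : ℕ → Set (Set X)
  center : ℕ → Set X → X
  radius : ℕ → Set X → ℝ
  measurable : ∀ k, ∀ Q ∈ cells k, MeasurableSet Q
  cover : ∀ k, ⋃₀ cells k = msupport μ
  pairwise_disjoint : ∀ k, ∀ Q ∈ cells k, ∀ R ∈ cells k, Q ≠ R → Disjoint Q R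
  nested : ∀ k l, k < l → ∀ Q ∈ cells l, ∀ R ∈ cells k, Q ⊆ R ∨ Disjoint Q R
  center_mem : ∀ k, ∀ Q ∈ cells k, center k Q ∈ msupport μ
  radius_lb : ∀ k, ∀ Q ∈ cells k, A0 ^ (-(k : ℤ)) ≤ radius k Q
  radius_ub : ∀ k, ∀ Q ∈ cells k, radius k Q ≤ C0 * A0 ^ (-(k : ℤ))
  ball_subset : ∀ k, ∀ Q ∈ cells k, msupport μ ∩ ball (center k Q) (radius k Q) ⊆ Q
  subset_ball : ∀ k, ∀ Q ∈ cells k, Q ⊆ msupport μ ∩ ball (center k Q) (28 * radius k Q)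
  disjoint_five : ∀ k, ∀ Q ∈ cells k, ∀ R ∈ cells k, Q ≠ R →
    Disjoint (ball (center k Q) (5 * radius k Q)) (ball (center k R) (5 * radius k R))
  nondoubling : ∀ k, ∀ Q ∈ cells k,
    ENNReal.ofReal C0 * μ (ball (center k Q) (radius k Q)) <
        μ (ball (center k Q) (100 * radius k Q)) →
      radius k Q = A0 ^ (-(k : ℤ)) ∧
      ∀ c : ℝ, 1 ≤ c → c ≤ C0 →
        ENNReal.ofReal C0 * μ (ball (center k Q) (c * radius k Q)) ≤
          μ (ball (center k Q) (100 * c * radius k Q))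

/-- The average `A(f,Q) = μ(αB(Q))⁻¹ ∫_{30B(Q)} |f| dμ` attached to a ball `B(z,r)`. -/
noncomputable def cellAvg (μ : Measure X) (α : ℝ) (f : X → ℂ) (z : X) (r : ℝ) : ℝ≥0∞ :=
  (∫⁻ y in ball z (30 * r), ‖f y‖₊ ∂μ) / μ (ball z (α * r))

/-- `Θ(Q) = μ(αB(Q)) / λ(z_Q, α r(Q))`. -/
noncomputable def theta (μ : Measure X) (lam : X → ℝ → ℝ) (α : ℝ) (z : X) (r : ℝ) : ℝ≥0∞ :=
  μ (ball z (α * r)) / ENNReal.ofReal (lam z (α * r))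

/-- The maximal function `M_λ f(x) = sup_{R>0} λ(x,R)⁻¹ ∫_{B(x,R)} |f| dμ`. -/
noncomputable def Mlam (μ : Measure X) (lam : X → ℝ → ℝ) (f : X → ℂ) (x : X) : ℝ≥0∞ :=
  ⨆ (R : ℝ) (_ : 0 < R), (∫⁻ y in ball x R, ‖f y‖₊ ∂μ) / ENNReal.ofReal (lam x R)

/-- The localized grand maximal truncated operator `N_{Q₀}`. -/
noncomputable def grandMax (μ : Measure X) {C0 A0 : ℝ} (D : DavidMattila μ C0 A0)
    (K : X → X → ℂ) (Q0 : Set X) (f : X → ℂ) (x : X) : ℝ≥0∞ :=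
  Q0.indicator (fun x' =>
    ⨆ (k : ℕ) (P : Set X) (_ : P ∈ D.cells k) (_ : x' ∈ P) (_ : P ⊆ Q0) (y : X) (_ : y ∈ P),
      ENNReal.ofReal
        ‖∫ z in (ball (D.center k P) (30 * D.radius k P))ᶜ, K y z * f z ∂μ‖) x

/-- `∫_S w dμ` for a weight `w`. -/
noncomputable def wInt (μ : Measure X) (w : X → ℝ) (S : Set X) : ℝ≥0∞ :=
  ∫⁻ x in S, ENNReal.ofReal (w x) ∂μ

end

/-!
For a cell `P ∋ x, y`, the integral of `K(y,·) f` off `30B(P)` differs from the truncation of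
`T f(x)` at radius `224 r(P)` by a size term on a ball of radius `≈ r(P)` and by the Hörmander
term `K(y,·) - K(x,·)` far from `x`; both are bounded by `M_λ f(x)`, using
`λ(x, 2ⁿa) ≤ C_λⁿ λ(x, a)` and, for the second, a dyadic decomposition that produces `‖ω‖_Dini`.
Conversely, a truncation at radius `ε` is compared with the cell through `x` of the generation
`k` with `A₀^(-k) ≈ ε`, or with `Q₀` itself when `ε` is large, since `f` vanishes off `30B(Q₀)`;
the difference is a size term on an annulus of bounded eccentricity.
-/

open MeasureTheory Metric Set ENNReal

section UpperDoubling

variable {X : Type*} [MetricSpace X] [MeasurableSpace X] {μ : Measure X}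
  {lam : X → ℝ → ℝ} {Cl : ℝ}

namespace IsUpperDoubling

lemma lam_two_pow_mul_le (hud : IsUpperDoubling μ lam Cl) (x : X) {a : ℝ} (ha : 0 < a)
    (n : ℕ) : lam x (2 ^ n * a) ≤ Cl ^ n * lam x a := by
  induction n with
  | zero => simp
  | succ n ih =>
    have h := hud.halving x (2 ^ (n + 1) * a) (by positivity)
    rw [show 2 ^ (n + 1) * a / 2 = 2 ^ n * a by ring] at h
    calc lam x (2 ^ (n + 1) * a) ≤ Cl * lam x (2 ^ n * a) := h
      _ ≤ Cl * (Cl ^ n * lam x a) := by gcongr; linarith [hud.one_lt]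
      _ = Cl ^ (n + 1) * lam x a := by ring

lemma lam_le_pow_mul (hud : IsUpperDoubling μ lam Cl) (x : X) {a b : ℝ} {n : ℕ} (ha : 0 < a)
    (hb : 0 < b) (hba : b ≤ 2 ^ n * a) : lam x b ≤ Cl ^ n * lam x a :=
  (hud.lam_mono x b _ hb hba).trans (hud.lam_two_pow_mul_le x ha n)

lemma lam_le_pow_succ_mul_of_dist_le (hud : IsUpperDoubling μ lam Cl) {x y : X} {a R : ℝ}
    {n : ℕ} (ha : 0 < a) (hR : 0 < R) (hxy : dist x y ≤ R) (hRa : R ≤ 2 ^ n * a) :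
    lam x R ≤ Cl ^ (n + 1) * lam y a :=
  calc lam x R ≤ Cl * lam y R := hud.close x y R hR hxy
    _ ≤ Cl * (Cl ^ n * lam y a) := by
        gcongr
        · linarith [hud.one_lt]
        · exact hud.lam_le_pow_mul y ha hR hRa
    _ = Cl ^ (n + 1) * lam y a := by ring

end IsUpperDoubling

lemma lintegral_ball_le_lam_mul_Mlam (hud : IsUpperDoubling μ lam Cl) (f : X → ℂ) (x : X)
    {R : ℝ} (hR : 0 < R) :
    ∫⁻ z in ball x R, ‖f z‖ₑ ∂μ ≤ ENNReal.ofReal (lam x R) * Mlam μ lam f x := by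
  rw [mul_comm, ← ENNReal.div_le_iff (by simpa using hud.lam_pos x R hR) ofReal_ne_top]
  exact le_iSup₂ (f := fun (R : ℝ) (_ : 0 < R) =>
    (∫⁻ z in ball x R, ‖f z‖ₑ ∂μ) / ENNReal.ofReal (lam x R)) R hR

lemma setLIntegral_enorm_mul_le_Mlam
    (hud : IsUpperDoubling μ lam Cl) {S : Set X} (hS : MeasurableSet S) {x : X}
    {R L c C : ℝ} (hR : 0 < R) (hSR : S ⊆ ball x R) (hL : 0 < L) (hc : 0 ≤ c)
    (hlam : lam x R ≤ C * L) {g : X → ℂ} (hg : ∀ z ∈ S, ‖g z‖ ≤ c / L) (f : X → ℂ) :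
    ∫⁻ z in S, ‖g z * f z‖ₑ ∂μ ≤ ENNReal.ofReal (c * C) * Mlam μ lam f x :=
  calc ∫⁻ z in S, ‖g z * f z‖ₑ ∂μ ≤ ∫⁻ z in S, ENNReal.ofReal (c / L) * ‖f z‖ₑ ∂μ :=
        setLIntegral_mono' hS fun z hz => by
          rw [enorm_mul, ← ofReal_norm]
          gcongr
          exact hg z hz
    _ ≤ ENNReal.ofReal (c / L) * ∫⁻ z in ball x R, ‖f z‖ₑ ∂μ := by
        rw [lintegral_const_mul' _ _ ofReal_ne_top]
        gcongr
    _ ≤ ENNReal.ofReal (c / L) * (ENNReal.ofReal (lam x R) * Mlam μ lam f x) := by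
        gcongr
        exact lintegral_ball_le_lam_mul_Mlam hud f x hR
    _ ≤ ENNReal.ofReal (c * C) * Mlam μ lam f x := by
        rw [← mul_assoc, ← ENNReal.ofReal_mul (by positivity)]
        refine mul_le_mul_left (ENNReal.ofReal_le_ofReal ?_) _
        rw [div_mul_eq_mul_div, div_le_iff₀ hL, mul_assoc]
        exact mul_le_mul_of_nonneg_left hlam hc

end UpperDoubling

lemma IsDiniModulus.exists_lt {ω : ℝ → ℝ} (hω : IsDiniModulus ω) {ε : ℝ} (hε : 0 < ε) :
    ∃ j : ℕ, ω (2 ^ (-(j : ℤ))) < ε :=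
  (hω.summable.tendsto_atTop_zero.eventually (gt_mem_nhds hε)).exists

lemma compl_ball_subset_iUnion_annuli {X : Type*} [PseudoMetricSpace X] (x : X) {ρ : ℝ}
    (hρ : 0 < ρ) : (ball x ρ)ᶜ ⊆ ⋃ j : ℕ, ball x (2 ^ (j + 1) * ρ) \ ball x (2 ^ j * ρ) := by
  intro z hz
  have h1 : 1 ≤ dist z x / ρ := by
    rw [one_le_div hρ]
    simpa using hz
  obtain ⟨j, hj, hj'⟩ := exists_nat_pow_near h1 one_lt_two
  refine mem_iUnion.2 ⟨j, ?_, ?_⟩ <;> simp only [mem_ball, not_lt]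
  · rwa [div_lt_iff₀ hρ] at hj'
  · rwa [le_div_iff₀ hρ] at hj

section Kernel

variable {X : Type*} [MetricSpace X] [MeasurableSpace X] {μ : Measure X}
  {lam : X → ℝ → ℝ} {Cl : ℝ} {ω : ℝ → ℝ} {K : X → X → ℂ} {CK : ℝ}

namespace IsCZKernel

lemma const_nonneg (hud : IsUpperDoubling μ lam Cl) (hK : IsCZKernel lam K CK ω) {x y : X}
    (hxy : x ≠ y) : 0 ≤ CK := by
  have h := (norm_nonneg _).trans (hK.size x y hxy)
  exact nonneg_of_mul_nonneg_left (by simpa [div_eq_mul_inv] using h)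
    (inv_pos.2 (hud.lam_pos x _ (dist_pos.2 hxy)))

lemma norm_le_div_lam_of_le_dist (hud : IsUpperDoubling μ lam Cl) (hK : IsCZKernel lam K CK ω)
    (hCK : 0 ≤ CK) {y z : X} {a : ℝ} (ha : 0 < a) (hd : a ≤ dist y z) :
    ‖K y z‖ ≤ CK / lam y a :=
  (hK.size y z (dist_pos.1 (ha.trans_le hd))).trans
    (div_le_div_of_nonneg_left hCK (hud.lam_pos y a ha) (hud.lam_mono y a _ ha hd))

lemma norm_sub_le_of_two_pow_mul_le_dist (hud : IsUpperDoubling μ lam Cl)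
    (hω : IsDiniModulus ω) (hK : IsCZKernel lam K CK ω) {x y z : X} {ρ : ℝ} (hρ : 0 < ρ)
    (hxy : dist x y ≤ ρ) {j : ℕ} (hz : 2 ^ j * (4 * ρ) ≤ dist x z) :
    ‖K y z - K x z‖ ≤ ω (2 ^ (-(j : ℤ))) / lam x (2 ^ j * (4 * ρ)) := by
  have hj : (1 : ℝ) ≤ 2 ^ j := one_le_pow₀ one_le_two
  have hd : 0 < dist x z := by nlinarith
  have hsmooth := hK.smooth x y z (dist_pos.1 hd) (by nlinarith)
  have hratio : dist x y / dist x z ≤ 2 ^ (-(j : ℤ)) := by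
    rw [div_le_iff₀ hd, zpow_neg, zpow_natCast, inv_mul_eq_div, le_div_iff₀ (by positivity)]
    nlinarith
  calc ‖K y z - K x z‖ ≤ ω (dist x y / dist x z) / lam x (dist x z) := by
        rw [norm_sub_rev]
        linarith [norm_nonneg (K z x - K z y)]
    _ ≤ ω (2 ^ (-(j : ℤ))) / lam x (2 ^ j * (4 * ρ)) := by
        gcongr
        · exact hω.nonneg _ (by positivity)
        · exact hud.lam_pos x _ (by positivity)
        · exact hω.mono (by simp only [mem_Ici]; positivity) (by simp only [mem_Ici]; positivity) hratio
        · exact hud.lam_mono x _ _ (by positivity) hz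

lemma continuousOn_right (hud : IsUpperDoubling μ lam Cl) (hω : IsDiniModulus ω)
    (hK : IsCZKernel lam K CK ω) (y : X) : ContinuousOn (K y) {y}ᶜ := by
  refine continuousOn_of_forall_continuousAt fun z₀ hz₀ => Metric.continuousAt_iff.2 fun ε hε => ?_
  have hd : 0 < dist z₀ y := dist_pos.2 hz₀
  have hlam : 0 < lam z₀ (dist z₀ y) := hud.lam_pos z₀ _ hd
  obtain ⟨j, hj⟩ := hω.exists_lt (mul_pos hε hlam)
  refine ⟨min (dist z₀ y / 2) (2 ^ (-(j : ℤ)) * dist z₀ y), by positivity, fun z hz => ?_⟩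
  rw [lt_min_iff, dist_comm] at hz
  have hsmooth := hK.smooth z₀ z y hz₀ hz.1
  calc dist (K y z) (K y z₀) = ‖K y z₀ - K y z‖ := by rw [dist_eq_norm, norm_sub_rev]
    _ ≤ ω (dist z₀ z / dist z₀ y) / lam z₀ (dist z₀ y) := by
        linarith [norm_nonneg (K z₀ y - K z y)]
    _ ≤ ω (2 ^ (-(j : ℤ))) / lam z₀ (dist z₀ y) := by
        gcongr
        exact hω.mono (by simp only [mem_Ici]; positivity) (by simp only [mem_Ici]; positivity)
          (div_le_of_le_mul₀ hd.le (by positivity) hz.2.le)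
    _ < ε := (div_lt_iff₀ hlam).2 hj

lemma integrableOn_mul_compl_ball [OpensMeasurableSpace X] (hud : IsUpperDoubling μ lam Cl)
    (hω : IsDiniModulus ω) (hK : IsCZKernel lam K CK ω) (hCK : 0 ≤ CK) {f : X → ℂ}
    (hf : Integrable f μ) (y : X) {a : ℝ} (ha : 0 < a) :
    IntegrableOn (fun z => K y z * f z) (ball y a)ᶜ μ := by
  have hS : MeasurableSet (ball y a)ᶜ := measurableSet_ball.compl
  have hdist : ∀ z ∈ (ball y a)ᶜ, a ≤ dist y z := fun z hz => by
    simpa [dist_comm] using hz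
  have hKm : AEStronglyMeasurable (K y) (μ.restrict (ball y a)ᶜ) :=
    ((hK.continuousOn_right hud hω y).mono fun z (hz : z ∉ ball y a) (h : z = y) =>
      hz (h ▸ mem_ball_self ha)).aestronglyMeasurable hS
  refine Integrable.mono' ((hf.norm.const_mul (CK / lam y a)).restrict)
    (hKm.mul hf.aestronglyMeasurable.restrict) ((ae_restrict_iff' hS).2 (ae_of_all _ ?_))
  intro z hz
  rw [norm_mul]
  gcongr
  exact hK.norm_le_div_lam_of_le_dist hud hCK ha (hdist z hz)

end IsCZKernel

end Kernel

section KernelIntegrals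

variable {X : Type*} [MetricSpace X] [MeasurableSpace X] [OpensMeasurableSpace X]
  {μ : Measure X} {lam : X → ℝ → ℝ} {Cl : ℝ} {ω : ℝ → ℝ} {K : X → X → ℂ} {CK : ℝ}

lemma lintegral_kernel_mul_le_Mlam (hud : IsUpperDoubling μ lam Cl)
    (hK : IsCZKernel lam K CK ω) (hCK : 0 ≤ CK) (f : X → ℂ) {x y : X} {a R : ℝ} {n : ℕ}
    (ha : 0 < a) (hR : 0 < R) (hxy : dist x y ≤ R) (hRa : R ≤ 2 ^ n * a) :
    ∫⁻ z in ball x R \ ball y a, ‖K y z * f z‖ₑ ∂μ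
      ≤ ENNReal.ofReal (CK * Cl ^ (n + 1)) * Mlam μ lam f x :=
  setLIntegral_enorm_mul_le_Mlam hud (measurableSet_ball.diff measurableSet_ball) hR
    sdiff_subset (hud.lam_pos y a ha) hCK (hud.lam_le_pow_succ_mul_of_dist_le ha hR hxy hRa)
    (fun z hz => hK.norm_le_div_lam_of_le_dist hud hCK ha (by simpa [dist_comm] using hz.2)) f

/-- On the dyadic annulus `2^j·4ρ ≤ d(x,·) < 2^(j+1)·4ρ` the smoothness of `K` gives the factor
`ω(2^(-j))`; summing over `j` produces `‖ω‖_Dini`. -/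
lemma lintegral_kernel_sub_mul_le_Mlam (hud : IsUpperDoubling μ lam Cl)
    (hω : IsDiniModulus ω) (hK : IsCZKernel lam K CK ω) (f : X → ℂ) {x y : X} {ρ : ℝ}
    (hρ : 0 < ρ) (hxy : dist x y ≤ ρ) :
    ∫⁻ z in (ball x (4 * ρ))ᶜ, ‖(K y z - K x z) * f z‖ₑ ∂μ
      ≤ ENNReal.ofReal (Cl * diniNorm ω) * Mlam μ lam f x := by
  have hannulus : ∀ j : ℕ,
      ∫⁻ z in ball x (2 ^ (j + 1) * (4 * ρ)) \ ball x (2 ^ j * (4 * ρ)),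
          ‖(K y z - K x z) * f z‖ₑ ∂μ
        ≤ ENNReal.ofReal (ω (2 ^ (-(j : ℤ))) * Cl) * Mlam μ lam f x := fun j => by
    have hdouble := hud.lam_two_pow_mul_le x (by positivity : 0 < 2 ^ j * (4 * ρ)) 1
    simp only [pow_one, ← mul_assoc, ← pow_succ'] at hdouble
    have hpt : ∀ z ∈ ball x (2 ^ (j + 1) * (4 * ρ)) \ ball x (2 ^ j * (4 * ρ)),
        ‖K y z - K x z‖ ≤ ω (2 ^ (-(j : ℤ))) / lam x (2 ^ j * (4 * ρ)) := fun z hz =>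
      hK.norm_sub_le_of_two_pow_mul_le_dist hud hω hρ hxy (by simpa [dist_comm] using hz.2)
    exact setLIntegral_enorm_mul_le_Mlam hud (measurableSet_ball.diff measurableSet_ball)
      (by positivity) sdiff_subset (hud.lam_pos _ _ (by positivity))
      (hω.nonneg _ (by positivity)) (by simpa only [mul_assoc] using hdouble) hpt f
  have hsummable : Summable fun j : ℕ => ω (2 ^ (-(j : ℤ))) * Cl := hω.summable.mul_right Cl
  calc ∫⁻ z in (ball x (4 * ρ))ᶜ, ‖(K y z - K x z) * f z‖ₑ ∂μ
      ≤ ∫⁻ z in ⋃ j : ℕ, ball x (2 ^ (j + 1) * (4 * ρ)) \ ball x (2 ^ j * (4 * ρ)),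
          ‖(K y z - K x z) * f z‖ₑ ∂μ :=
        lintegral_mono_set (compl_ball_subset_iUnion_annuli x (by positivity))
    _ ≤ ∑' j : ℕ, ∫⁻ z in ball x (2 ^ (j + 1) * (4 * ρ)) \ ball x (2 ^ j * (4 * ρ)),
          ‖(K y z - K x z) * f z‖ₑ ∂μ := lintegral_iUnion_le _ _
    _ ≤ ∑' j : ℕ, ENNReal.ofReal (ω (2 ^ (-(j : ℤ))) * Cl) * Mlam μ lam f x :=
        ENNReal.tsum_le_tsum hannulus
    _ = ENNReal.ofReal (Cl * diniNorm ω) * Mlam μ lam f x := by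
        rw [ENNReal.tsum_mul_right, ← ENNReal.ofReal_tsum_of_nonneg
          (fun j => mul_nonneg (hω.nonneg _ (by positivity)) (by linarith [hud.one_lt]))
          hsummable, tsum_mul_right, diniNorm, mul_comm Cl]

end KernelIntegrals

lemma setIntegral_eq_inter_add_compl {X E : Type*} [MeasurableSpace X] [NormedAddCommGroup E]
    [NormedSpace ℝ E] {μ : Measure X} {g : X → E} {U B : Set X} (hB : MeasurableSet B)
    (hg : IntegrableOn g U μ) (h : Bᶜ ⊆ U ∨ Function.support g ⊆ B) :
    ∫ z in U, g z ∂μ = ∫ z in U ∩ B, g z ∂μ + ∫ z in Bᶜ, g z ∂μ := by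
  rw [← integral_inter_add_sdiff hB hg]
  congr 1
  rcases h with h | h
  · rw [sdiff_eq, inter_eq_right.2 h]
  · have hvanish : ∀ z ∉ B, g z = 0 := fun z hz => Function.notMem_support.1 fun h' => hz (h h')
    rw [setIntegral_eq_zero_of_forall_eq_zero fun z hz => hvanish z hz.2,
      setIntegral_eq_zero_of_forall_eq_zero (t := Bᶜ) fun z hz => hvanish z hz]

lemma ofReal_norm_setIntegral_le {X E : Type*} [MeasurableSpace X] [NormedAddCommGroup E]
    [NormedSpace ℝ E] {μ : Measure X} (S : Set X) (g : X → E) :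
    ENNReal.ofReal ‖∫ z in S, g z ∂μ‖ ≤ ∫⁻ z in S, ‖g z‖ₑ ∂μ := by
  rw [ofReal_norm]
  exact enorm_integral_le_lintegral_enorm _

lemma IsDiniModulus.diniNorm_nonneg {ω : ℝ → ℝ} (hω : IsDiniModulus ω) : 0 ≤ diniNorm ω :=
  tsum_nonneg fun _ => hω.nonneg _ (by positivity)

lemma le_Tsharp {X : Type*} [MetricSpace X] [MeasurableSpace X] (μ : Measure X)
    (K : X → X → ℂ) (f : X → ℂ) (x : X) {ε : ℝ} (hε : 0 < ε) :
    ENNReal.ofReal ‖∫ w in (closedBall x ε)ᶜ, K x w * f w ∂μ‖ ≤ Tsharp μ K f x :=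
  le_iSup₂ (f := fun ε (_ : 0 < ε) => ENNReal.ofReal ‖∫ w in (closedBall x ε)ᶜ, K x w * f w ∂μ‖)
    ε hε

section Comparison

variable {X : Type*} [MetricSpace X] [MeasurableSpace X] [OpensMeasurableSpace X]
  {μ : Measure X} {lam : X → ℝ → ℝ} {Cl : ℝ} {ω : ℝ → ℝ} {K : X → X → ℂ} {CK : ℝ}
  {f : X → ℂ}

/-- Split `∫_{B(z,30r)ᶜ} K(y,·) f` at the truncation `d(x,·) > 224 r`: the inner part is a
size estimate, the outer part is `T^♯` plus the Hörmander tail for `K(y,·) - K(x,·)`. -/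
lemma ofReal_norm_integral_compl_ball_le_Tsharp_add (hud : IsUpperDoubling μ lam Cl)
    (hω : IsDiniModulus ω) (hK : IsCZKernel lam K CK ω) (hCK : 0 ≤ CK) (hf : Integrable f μ)
    {x y z : X} {r : ℝ} (hx : dist x z < 28 * r) (hy : dist y z < 28 * r) :
    ENNReal.ofReal ‖∫ w in (ball z (30 * r))ᶜ, K y w * f w ∂μ‖
      ≤ Tsharp μ K f x + ENNReal.ofReal (Cl ^ 9 * (diniNorm ω + CK)) * Mlam μ lam f x := by
  have hr : 0 < r := by linarith [dist_nonneg (x := x) (y := z)]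
  set S := (ball z (30 * r))ᶜ
  set T := (closedBall x (224 * r))ᶜ
  have hxy : dist x y ≤ 56 * r := by linarith [dist_triangle_right x y z]
  have hSx : S ⊆ (ball x (2 * r))ᶜ := compl_subset_compl.2 (ball_subset_ball' (by linarith))
  have hSy : S ⊆ (ball y (2 * r))ᶜ := compl_subset_compl.2 (ball_subset_ball' (by linarith))
  have hTS : T ⊆ S := compl_subset_compl.2 <| ball_subset_closedBall.trans <|
    closedBall_subset_closedBall' (by rw [dist_comm]; linarith)
  have hy_int : IntegrableOn (fun w => K y w * f w) S μ :=
    (hK.integrableOn_mul_compl_ball hud hω hCK hf y (by positivity)).mono_set hSy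
  have hx_int : IntegrableOn (fun w => K x w * f w) T μ :=
    (hK.integrableOn_mul_compl_ball hud hω hCK hf x (by positivity)).mono_set (hTS.trans hSx)
  have hsplit : ∫ w in S, K y w * f w ∂μ = ∫ w in S \ T, K y w * f w ∂μ
      + ∫ w in T, K x w * f w ∂μ + ∫ w in T, (K y w - K x w) * f w ∂μ := by
    have hdiff : ∫ w in T, (K y w - K x w) * f w ∂μ
        = ∫ w in T, K y w * f w ∂μ - ∫ w in T, K x w * f w ∂μ := by
      simp_rw [sub_mul]
      exact integral_sub (hy_int.mono_set hTS) hx_int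
    rw [hdiff, ← integral_inter_add_sdiff measurableSet_closedBall.compl hy_int,
      inter_eq_right.2 hTS]
    abel
  have hnear : ∫⁻ w in S \ T, ‖K y w * f w‖ₑ ∂μ
      ≤ ENNReal.ofReal (CK * Cl ^ 9) * Mlam μ lam f x := by
    have hsub : S \ T ⊆ ball x (448 * r) \ ball y (2 * r) := fun w hw =>
      ⟨closedBall_subset_ball (by linarith) (notMem_compl_iff.1 hw.2), hSy hw.1⟩
    exact (lintegral_mono_set hsub).trans (lintegral_kernel_mul_le_Mlam hud hK hCK f
      (n := 8) (by positivity) (by positivity) (by linarith) (by norm_num; linarith))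
  have hfar : ∫⁻ w in T, ‖(K y w - K x w) * f w‖ₑ ∂μ
      ≤ ENNReal.ofReal (Cl * diniNorm ω) * Mlam μ lam f x := by
    refine (lintegral_mono_set ?_).trans
      (lintegral_kernel_sub_mul_le_Mlam hud hω hK f (by positivity : 0 < 56 * r) hxy)
    rw [show 4 * (56 * r) = 224 * r by ring]
    exact compl_subset_compl.2 ball_subset_closedBall
  have hCl : Cl ≤ Cl ^ 9 := le_self_pow₀ hud.one_lt.le (by norm_num)
  have hCl0 : 0 ≤ Cl := by linarith [hud.one_lt]
  have hdini := hω.diniNorm_nonneg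
  calc ENNReal.ofReal ‖∫ w in S, K y w * f w ∂μ‖
      ≤ ENNReal.ofReal ‖∫ w in S \ T, K y w * f w ∂μ‖ + ENNReal.ofReal ‖∫ w in T, K x w * f w ∂μ‖
          + ENNReal.ofReal ‖∫ w in T, (K y w - K x w) * f w ∂μ‖ := by
        rw [hsplit, ← ENNReal.ofReal_add (by positivity) (by positivity),
          ← ENNReal.ofReal_add (by positivity) (by positivity)]
        exact ENNReal.ofReal_le_ofReal (norm_add₃_le)
    _ ≤ ENNReal.ofReal (CK * Cl ^ 9) * Mlam μ lam f x + Tsharp μ K f x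
          + ENNReal.ofReal (Cl * diniNorm ω) * Mlam μ lam f x :=
        add_le_add (add_le_add ((ofReal_norm_setIntegral_le _ _).trans hnear)
          (le_Tsharp μ K f x (by positivity))) ((ofReal_norm_setIntegral_le _ _).trans hfar)
    _ = Tsharp μ K f x + ENNReal.ofReal (CK * Cl ^ 9 + Cl * diniNorm ω) * Mlam μ lam f x := by
        rw [ENNReal.ofReal_add (by positivity) (by positivity), add_mul]
        ring
    _ ≤ Tsharp μ K f x + ENNReal.ofReal (Cl ^ 9 * (diniNorm ω + CK)) * Mlam μ lam f x := by
        gcongr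
        nlinarith

/-- Split the truncated integral at the ball `B(z, 30 r)`: the part inside is a size estimate
on the annulus `ε < d(x,·) < 58 r`; the part outside is the whole complement of the ball,
either because `B̄(x, ε) ⊆ B(z, 30 r)` or because `f` vanishes there. -/
lemma ofReal_norm_integral_compl_closedBall_le (hud : IsUpperDoubling μ lam Cl)
    (hω : IsDiniModulus ω) (hK : IsCZKernel lam K CK ω) (hCK : 0 ≤ CK) (hf : Integrable f μ)
    {x z : X} {r ε : ℝ} {n : ℕ} (hε : 0 < ε) (hx : dist x z < 28 * r)
    (hn : 58 * r ≤ 2 ^ n * ε) (hB : ε ≤ 2 * r ∨ Function.support f ⊆ ball z (30 * r)) :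
    ENNReal.ofReal ‖∫ w in (closedBall x ε)ᶜ, K x w * f w ∂μ‖
      ≤ ENNReal.ofReal ‖∫ w in (ball z (30 * r))ᶜ, K x w * f w ∂μ‖
        + ENNReal.ofReal (CK * Cl ^ (n + 1)) * Mlam μ lam f x := by
  have hr : 0 < r := by linarith [dist_nonneg (x := x) (y := z)]
  have hint : IntegrableOn (fun w => K x w * f w) (closedBall x ε)ᶜ μ :=
    (hK.integrableOn_mul_compl_ball hud hω hCK hf x hε).mono_set
      (compl_subset_compl.2 ball_subset_closedBall)
  have hB' : (ball z (30 * r))ᶜ ⊆ (closedBall x ε)ᶜ ∨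
      Function.support (fun w => K x w * f w) ⊆ ball z (30 * r) :=
    hB.imp (fun h => compl_subset_compl.2 (closedBall_subset_ball' (by linarith)))
      (Function.support_mul_subset_right _ _).trans
  have hann : (closedBall x ε)ᶜ ∩ ball z (30 * r) ⊆ ball x (58 * r) \ ball x ε :=
    fun w hw => ⟨ball_subset_ball' (by rw [dist_comm]; linarith) hw.2,
      fun h => hw.1 (ball_subset_closedBall h)⟩
  rw [setIntegral_eq_inter_add_compl measurableSet_ball hint hB', add_comm]
  refine (ENNReal.ofReal_le_ofReal (norm_add_le _ _)).trans ?_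
  rw [ENNReal.ofReal_add (norm_nonneg _) (norm_nonneg _)]
  gcongr
  exact (ofReal_norm_setIntegral_le _ _).trans ((lintegral_mono_set hann).trans
    (lintegral_kernel_mul_le_Mlam hud hK hCK f hε (by positivity) (by simp; positivity) hn))

end Comparison

lemma exists_generation {A c ε : ℝ} (hA : 1 < A) (hε : 0 < ε) {k₀ : ℕ}
    (h : ε ≤ c * A ^ (-(k₀ : ℤ))) :
    ∃ k, k₀ ≤ k ∧ ε ≤ c * A ^ (-(k : ℤ)) ∧ c * A ^ (-(k : ℤ)) < A * ε := by
  obtain ⟨m, hm, hm'⟩ := exists_nat_pow_near ((one_le_div hε).2 h) hA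
  have hpow : A ^ (-((k₀ + m : ℕ) : ℤ)) = A ^ (-(k₀ : ℤ)) / A ^ m := by
    rw [Nat.cast_add, neg_add, zpow_add₀ (by positivity), zpow_neg A (m : ℤ), zpow_natCast,
      div_eq_mul_inv]
  rw [le_div_iff₀ hε] at hm
  rw [div_lt_iff₀ hε, pow_succ] at hm'
  refine ⟨k₀ + m, Nat.le_add_right _ _, ?_, ?_⟩
  · rw [hpow, ← mul_div_assoc, le_div_iff₀ (by positivity)]
    linarith
  · rw [hpow, ← mul_div_assoc, div_lt_iff₀ (by positivity)]
    linarith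

namespace DavidMattila

variable {X : Type*} [MetricSpace X] [MeasurableSpace X] {μ : Measure X} {C0 A0 : ℝ}
  (D : DavidMattila μ C0 A0)

lemma dist_center_lt {k : ℕ} {P : Set X} (hP : P ∈ D.cells k) {x : X} (hx : x ∈ P) :
    dist x (D.center k P) < 28 * D.radius k P :=
  (D.subset_ball k P hP hx).2

lemma exists_mem_cells {x : X} (hx : x ∈ msupport μ) (k : ℕ) : ∃ P ∈ D.cells k, x ∈ P := by
  rwa [← D.cover k] at hx

lemma subset_of_le {k₀ k : ℕ} (hk : k₀ ≤ k) {Q P : Set X} (hQ : Q ∈ D.cells k₀)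
    (hP : P ∈ D.cells k) {x : X} (hxQ : x ∈ Q) (hxP : x ∈ P) : P ⊆ Q := by
  rcases hk.eq_or_lt with rfl | hlt
  · obtain rfl : P = Q := by_contra fun hne =>
      disjoint_left.1 (D.pairwise_disjoint _ P hP Q hQ hne) hxP hxQ
    exact subset_rfl
  · exact (D.nested k₀ k hlt P hP Q hQ).resolve_right fun h => disjoint_left.1 h hxP hxQ

lemma exists_cell_of_truncation (hC0 : 0 ≤ C0) (hA0 : 1 < A0) {k₀ : ℕ} {Q₀ : Set X}
    (hQ₀ : Q₀ ∈ D.cells k₀) {x : X} (hx : x ∈ Q₀) {ε : ℝ} (hε : 0 < ε) :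
    ∃ k, ∃ P ∈ D.cells k, x ∈ P ∧ P ⊆ Q₀ ∧ 2 * D.radius k P ≤ C0 * A0 * ε ∧
      (ε ≤ 2 * D.radius k P ∨ k = k₀ ∧ P = Q₀) := by
  by_cases hsmall : ε ≤ 2 * A0 ^ (-(k₀ : ℤ))
  · obtain ⟨k, hk, hεk, hkε⟩ := exists_generation hA0 hε hsmall
    obtain ⟨P, hP, hxP⟩ := D.exists_mem_cells (D.subset_ball k₀ Q₀ hQ₀ hx).1 k
    refine ⟨k, P, hP, hxP, D.subset_of_le hk hQ₀ hP hx hxP, ?_, Or.inl ?_⟩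
    · nlinarith [D.radius_ub k P hP]
    · linarith [D.radius_lb k P hP]
  · refine ⟨k₀, Q₀, hQ₀, hx, subset_rfl, ?_, Or.inr ⟨rfl, rfl⟩⟩
    calc 2 * D.radius k₀ Q₀ ≤ C0 * (2 * A0 ^ (-(k₀ : ℤ))) := by
          linarith [D.radius_ub k₀ Q₀ hQ₀]
      _ ≤ C0 * (A0 * ε) := mul_le_mul_of_nonneg_left (by nlinarith [not_le.1 hsmall]) hC0
      _ = C0 * A0 * ε := by ring

variable {K : X → X → ℂ} {Q₀ : Set X} {f : X → ℂ} {x : X}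

lemma le_grandMax (hx : x ∈ Q₀) {k : ℕ} {P : Set X} (hP : P ∈ D.cells k) (hxP : x ∈ P)
    (hPQ : P ⊆ Q₀) {y : X} (hyP : y ∈ P) :
    ENNReal.ofReal ‖∫ z in (ball (D.center k P) (30 * D.radius k P))ᶜ, K y z * f z ∂μ‖
      ≤ grandMax μ D K Q₀ f x := by
  rw [grandMax, indicator_of_mem hx]
  exact le_iSup_of_le k <| le_iSup₂_of_le P hP <| le_iSup₂_of_le hxP hPQ <|
    le_iSup₂_of_le y hyP le_rfl

lemma grandMax_le {c : ℝ≥0∞} (h : ∀ k, ∀ P ∈ D.cells k, x ∈ P → P ⊆ Q₀ → ∀ y ∈ P,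
      ENNReal.ofReal ‖∫ z in (ball (D.center k P) (30 * D.radius k P))ᶜ, K y z * f z ∂μ‖ ≤ c) :
    grandMax μ D K Q₀ f x ≤ c := by
  rw [grandMax]
  by_cases hx : x ∈ Q₀
  · rw [indicator_of_mem hx]
    exact iSup_le fun k => iSup₂_le fun P hP => iSup₂_le fun hxP hPQ =>
      iSup₂_le fun y hy => h k P hP hxP hPQ y hy
  · rw [indicator_of_notMem hx]
    exact zero_le

lemma grandMax_eq_zero_of_subsingleton [Subsingleton X] : grandMax μ D K Q₀ f x = 0 :=
  nonpos_iff_eq_zero.1 <| D.grandMax_le fun k P hP _ _ y hy => by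
    have hr : 0 < 30 * D.radius k P := by
      linarith [D.dist_center_lt hP hy, dist_nonneg (x := y) (y := D.center k P)]
    simp [(nonempty_ball.2 hr).eq_univ]

end DavidMattila

lemma Tsharp_eq_zero_of_subsingleton {X : Type*} [MetricSpace X] [MeasurableSpace X]
    [Subsingleton X] (μ : Measure X) (K : X → X → ℂ) (f : X → ℂ) (x : X) : Tsharp μ K f x = 0 :=
  nonpos_iff_eq_zero.1 <| iSup₂_le fun ε hε => by
    simp [(nonempty_closedBall.2 hε.le).eq_univ]

open MeasureTheory Metric Set ENNReal in
theorem grandMax_compare_Tsharp_general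
    {X : Type*} [MetricSpace X] [MeasurableSpace X] [BorelSpace X]
    (μ : Measure X)
    (lam : X → ℝ → ℝ) (Cl : ℝ) (hud : IsUpperDoubling μ lam Cl)
    (ω : ℝ → ℝ) (hω : IsDiniModulus ω)
    (K : X → X → ℂ) (CK : ℝ) (hK : IsCZKernel lam K CK ω)
    (C0 A0 : ℝ) (hC0 : 1 < C0) (hA0 : 5000 * C0 < A0)
    (D : DavidMattila μ C0 A0) :
    ∃ C : ℝ, 0 < C ∧
      ∀ (k₀ : ℕ), ∀ Q₀ ∈ D.cells k₀,
        ∀ f : X → ℂ, Integrable f μ →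
          Function.support f ⊆ ball (D.center k₀ Q₀) (30 * D.radius k₀ Q₀) →
          ∀ x ∈ Q₀,
            grandMax μ D K Q₀ f x ≤
                Tsharp μ K f x +
                  ENNReal.ofReal (C * (diniNorm ω + CK)) * Mlam μ lam f x ∧
            Tsharp μ K f x ≤
                grandMax μ D K Q₀ f x +
                  ENNReal.ofReal (C * (diniNorm ω + CK)) * Mlam μ lam f x := by
  -- On a one-point space both sides vanish; otherwise the size condition forces `0 ≤ CK`.
  rcases subsingleton_or_nontrivial X with hX | hX
  · exact ⟨1, one_pos, fun _ _ _ f _ _ x _ => by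
      simp [D.grandMax_eq_zero_of_subsingleton, Tsharp_eq_zero_of_subsingleton]⟩
  obtain ⟨p, q, hpq⟩ := exists_pair_ne X
  have hCK : 0 ≤ CK := hK.const_nonneg hud hpq
  have hCl : 1 ≤ Cl := hud.one_lt.le
  have hdini := hω.diniNorm_nonneg
  obtain ⟨n, hn⟩ := pow_unbounded_of_one_lt (29 * C0 * A0) one_lt_two
  refine ⟨Cl ^ (n + 9), by positivity, fun k₀ Q₀ hQ₀ f hf hsupp x hx => ⟨?_, ?_⟩⟩
  · refine D.grandMax_le fun k P hP hxP _ y hyP =>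
      (ofReal_norm_integral_compl_ball_le_Tsharp_add hud hω hK hCK hf
        (D.dist_center_lt hP hxP) (D.dist_center_lt hP hyP)).trans ?_
    gcongr
    omega
  · refine iSup₂_le fun ε hε => ?_
    obtain ⟨k, P, hP, hxP, hPQ, hr, hcase⟩ :=
      D.exists_cell_of_truncation (by linarith) (by linarith) hQ₀ hx hε
    have hB : ε ≤ 2 * D.radius k P ∨
        Function.support f ⊆ ball (D.center k P) (30 * D.radius k P) := by
      rcases hcase with h | ⟨rfl, rfl⟩
      exacts [Or.inl h, Or.inr hsupp]
    refine (ofReal_norm_integral_compl_closedBall_le hud hω hK hCK hf hε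
      (D.dist_center_lt hP hxP) (by nlinarith) hB).trans
      (add_le_add (D.le_grandMax hx hP hxP hPQ hxP) ?_)
    refine mul_le_mul_left (ENNReal.ofReal_le_ofReal ?_) _
    calc CK * Cl ^ (n + 1) ≤ Cl ^ (n + 9) * CK := by
          rw [mul_comm]; gcongr; omega
      _ ≤ Cl ^ (n + 9) * (diniNorm ω + CK) := by gcongr; linarith

open MeasureTheory Metric Set ENNReal in
/-- Pointwise comparison of the localized grand maximal truncated operator `N_{Q₀}` with
the maximal truncation `T^♯`: `|N_{Q₀}f − T^♯f| ≤ C(‖ω‖_Dini + C_K) M_λ f` on `Q₀`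
(stated as a two-sided inequality since both quantities are `ℝ≥0∞`-valued). -/
theorem grandMax_compare_Tsharp
    {X : Type*} [MetricSpace X] [MeasurableSpace X] [BorelSpace X]
    (μ : Measure X) [IsLocallyFiniteMeasure μ]
    (lam : X → ℝ → ℝ) (Cl : ℝ) (hud : IsUpperDoubling μ lam Cl)
    (ω : ℝ → ℝ) (hω : IsDiniModulus ω)
    (K : X → X → ℂ) (CK : ℝ) (hK : IsCZKernel lam K CK ω)
    (C0 A0 : ℝ) (hC0 : 1 < C0) (hA0 : 5000 * C0 < A0)
    (D : DavidMattila μ C0 A0) :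
    ∃ C : ℝ, 0 < C ∧
      ∀ (k₀ : ℕ), ∀ Q₀ ∈ D.cells k₀,
        ∀ f : X → ℂ, Integrable f μ →
          Function.support f ⊆ ball (D.center k₀ Q₀) (30 * D.radius k₀ Q₀) →
          ∀ x ∈ Q₀,
            grandMax μ D K Q₀ f x ≤
                Tsharp μ K f x +
                  ENNReal.ofReal (C * (diniNorm ω + CK)) * Mlam μ lam f x ∧
            Tsharp μ K f x ≤
                grandMax μ D K Q₀ f x +
                  ENNReal.ofReal (C * (diniNorm ω + CK)) * Mlam μ lam f x :=
  grandMax_compare_Tsharp_general μ lam Cl hud ω hω K CK hK C0 A0 hC0 hA0 D
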